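/- arXiv:2205.07734 — 5 statements merged into one kernel-verified Lean document; each statement's English description precedes it below -/
import Mathlib

section
/- In the skew-product setting, the subgroup P of X generated by G together with σ^k is a normal subgroup of X, and P has order p^(n+m); in particular P is a normal Sylow p-subgroup of X. -/
/-!
By Itô's theorem, `X = G⟨σ⟩` is a product of two abelian subgroups, so its derived subgroup `X'`
is abelian. The elements of `X'` of order prime to `p` form a normal subgroup whose order is prime
to `[X : ⟨σ⟩] = |G| = p ^ n`, so it lies in `⟨σ⟩`, hence is trivial as `⟨σ⟩` is core-free. Thus `X'`
is a `p`-group, and the preimage of the Sylow `p`-subgroup of the abelianization `X / X'` is a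
normal Sylow `p`-subgroup `P` of `X`, of order `p ^ (n + m)`. It contains the `p`-groups `G` and
`⟨σ ^ k⟩`, which meet trivially, so `|G ⊔ ⟨σ ^ k⟩| ≥ p ^ n * p ^ m = |P|` forces `G ⊔ ⟨σ ^ k⟩ = P`.
-/

open scoped commutatorElement Pointwise

section

variable {X : Type*} [Group X]

theorem conj_commutatorElement_of_commute_left {x a b a' b' : X} (hxa : Commute x a)
    (haa' : Commute a a') (h : x * b * x⁻¹ = b' * a') : x * ⁅a, b⁆ * x⁻¹ = ⁅a, b'⁆ := by
  calc x * ⁅a, b⁆ * x⁻¹ = a * b' * (a' * a⁻¹ * a'⁻¹) * b'⁻¹ := by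
        rw [conjugate_commutatorElement, hxa.eq, mul_inv_cancel_right, h, commutatorElement_def]
        group
    _ = ⁅a, b'⁆ := by rw [← haa'.inv_left.eq, mul_inv_cancel_right, commutatorElement_def]

theorem conj_commutatorElement_of_commute_right {y a b a' b' : X} (hyb : Commute y b)
    (hbb' : Commute b' b) (h : y * a * y⁻¹ = a' * b') : y * ⁅a, b⁆ * y⁻¹ = ⁅a', b⁆ := by
  calc y * ⁅a, b⁆ * y⁻¹ = a' * (b' * b * b'⁻¹) * a'⁻¹ * b⁻¹ := by
        rw [conjugate_commutatorElement, hyb.eq, mul_inv_cancel_right, h, commutatorElement_def]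
        group
    _ = ⁅a', b⁆ := by rw [hbb'.eq, mul_inv_cancel_right, commutatorElement_def]

section Ito

variable {A B : Subgroup X} [IsMulCommutative A] [IsMulCommutative B]
  (hAB : (A : Set X) * (B : Set X) = Set.univ)
include hAB

omit [IsMulCommutative A] [IsMulCommutative B] in
theorem exists_mem_mem_mul_eq (x : X) : ∃ a ∈ A, ∃ b ∈ B, a * b = x :=
  Set.mem_mul.mp (hAB ▸ Set.mem_univ x)

omit [IsMulCommutative A] [IsMulCommutative B] in
theorem exists_mem_mem_mul_eq' (x : X) : ∃ b ∈ B, ∃ a ∈ A, b * a = x := by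
  obtain ⟨a, ha, b, hb, hx⟩ := exists_mem_mem_mul_eq hAB x⁻¹
  exact ⟨b⁻¹, inv_mem hb, a⁻¹, inv_mem ha, by rw [← mul_inv_rev, hx, inv_inv]⟩

theorem conj_commutatorElement_mul_comm {a b x y : X} (ha : a ∈ A) (hb : b ∈ B)
    (hx : x ∈ A) (hy : y ∈ B) :
    (x * y) * ⁅a, b⁆ * (x * y)⁻¹ = (y * x) * ⁅a, b⁆ * (y * x)⁻¹ := by
  obtain ⟨a', ha', b', hb', hya⟩ := exists_mem_mem_mul_eq hAB (y * a * y⁻¹)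
  obtain ⟨b'', hb'', a'', ha'', hxb⟩ := exists_mem_mem_mul_eq' hAB (x * b * x⁻¹)
  have hA {u v : X} (hu : u ∈ A) (hv : v ∈ A) : Commute u v := setLike_mul_comm hu hv
  have hB {u v : X} (hu : u ∈ B) (hv : v ∈ B) : Commute u v := setLike_mul_comm hu hv
  have hconj (u v : X) : (u * v) * ⁅a, b⁆ * (u * v)⁻¹ = u * (v * ⁅a, b⁆ * v⁻¹) * u⁻¹ := by group
  rw [hconj, hconj,
    conj_commutatorElement_of_commute_right (hB hy hb) (hB hb' hb) hya.symm,
    conj_commutatorElement_of_commute_left (hA hx ha) (hA ha ha'') hxb.symm,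
    conj_commutatorElement_of_commute_left (hA hx ha') (hA ha' ha'') hxb.symm,
    conj_commutatorElement_of_commute_right (hB hy hb'') (hB hb' hb'') hya.symm]

theorem commute_commutatorElement {a a' b b' : X} (ha : a ∈ A) (ha' : a' ∈ A) (hb : b ∈ B)
    (hb' : b' ∈ B) : Commute ⁅a, b⁆ ⁅a', b'⁆ := by
  have key := conj_commutatorElement_mul_comm hAB ha' hb' (inv_mem ha) (inv_mem hb)
  refine mul_inv_eq_iff_eq_mul.mp ?_
  calc ⁅a, b⁆ * ⁅a', b'⁆ * ⁅a, b⁆⁻¹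
      = (b⁻¹ * a⁻¹)⁻¹ * ((a⁻¹ * b⁻¹) * ⁅a', b'⁆ * (a⁻¹ * b⁻¹)⁻¹) * (b⁻¹ * a⁻¹) := by
        rw [commutatorElement_def a b]; group
    _ = ⁅a', b'⁆ := by rw [key]; group

theorem Subgroup.isMulCommutative_commutator_of_mul_eq_univ :
    IsMulCommutative (⁅A, B⁆ : Subgroup X) := by
  rw [Subgroup.commutator_def]
  refine Subgroup.isMulCommutative_closure ?_
  rintro _ ⟨a, ha, b, hb, rfl⟩ _ ⟨a', ha', b', hb', rfl⟩
  exact commute_commutatorElement hAB ha ha' hb hb'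

theorem Subgroup.commutator_normal_of_mul_eq_univ : ⁅A, B⁆.Normal := by
  let base : Set X := {x | ∃ a ∈ A, ∃ b ∈ B, ⁅a, b⁆ = x}
  change (Subgroup.closure base).Normal
  suffices base = Group.conjugatesOfSet base by rw [this]; exact Subgroup.normalClosure_normal
  refine Set.Subset.antisymm Group.subset_conjugatesOfSet fun c hc => ?_
  simp_rw [Group.mem_conjugatesOfSet_iff, isConj_iff] at hc
  obtain ⟨_, ⟨a, ha, b, hb, rfl⟩, g, rfl⟩ := hc
  obtain ⟨x, hx, y, hy, rfl⟩ := exists_mem_mem_mul_eq hAB g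
  obtain ⟨a', ha', b', hb', hya⟩ := exists_mem_mem_mul_eq hAB (y * a * y⁻¹)
  obtain ⟨b'', hb'', a'', ha'', hxb⟩ := exists_mem_mem_mul_eq' hAB (x * b * x⁻¹)
  refine ⟨a', ha', b'', hb'', ?_⟩
  rw [show x * y * ⁅a, b⁆ * (x * y)⁻¹ = x * (y * ⁅a, b⁆ * y⁻¹) * x⁻¹ by group,
    conj_commutatorElement_of_commute_right (setLike_mul_comm hy hb) (setLike_mul_comm hb' hb)
      hya.symm,
    conj_commutatorElement_of_commute_left (setLike_mul_comm hx ha') (setLike_mul_comm ha' ha'')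
      hxb.symm]

theorem commutator_le_of_mul_eq_univ : commutator X ≤ ⁅A, B⁆ := by
  have := Subgroup.commutator_normal_of_mul_eq_univ hAB
  have mul_right (u y z : X) : ⁅u, y * z⁆ = ⁅u, y⁆ * (y * ⁅u, z⁆ * y⁻¹) := by
    simp only [commutatorElement_def]; group
  have mem_left {a : X} (ha : a ∈ A) (v : X) : ⁅a, v⁆ ∈ ⁅A, B⁆ := by
    obtain ⟨a', ha', b', hb', rfl⟩ := exists_mem_mem_mul_eq hAB v
    rw [mul_right, commutatorElement_eq_one_iff_commute.mpr (setLike_mul_comm ha ha'), one_mul]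
    exact this.conj_mem _ (Subgroup.commutator_mem_commutator ha hb') a'
  have mem_right {b : X} (hb : b ∈ B) (v : X) : ⁅b, v⁆ ∈ ⁅A, B⁆ := by
    obtain ⟨a', ha', b', hb', rfl⟩ := exists_mem_mem_mul_eq hAB v
    rw [mul_right, commutatorElement_eq_one_iff_commute.mpr (setLike_mul_comm hb hb'), mul_one,
      mul_inv_cancel, mul_one, ← commutatorElement_inv]
    exact inv_mem (Subgroup.commutator_mem_commutator ha' hb)
  refine Subgroup.commutator_le.mpr fun u _ v _ => ?_
  obtain ⟨a, ha, b, hb, rfl⟩ := exists_mem_mem_mul_eq hAB u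
  rw [show ⁅a * b, v⁆ = a * ⁅b, v⁆ * a⁻¹ * ⁅a, v⁆ by simp only [commutatorElement_def]; group]
  exact mul_mem (this.conj_mem _ (mem_right hb v) a) (mem_left ha v)

/-- **Itô's theorem**. -/
theorem isMulCommutative_commutator_of_mul_eq_univ : IsMulCommutative (commutator X) :=
  have := Subgroup.isMulCommutative_commutator_of_mul_eq_univ hAB
  .of_setLike_mul_comm fun _ hu _ hv =>
    setLike_mul_comm (commutator_le_of_mul_eq_univ hAB hu) (commutator_le_of_mul_eq_univ hAB hv)

end Ito

namespace Subgroup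

theorem relIndex_sup_left_of_normal [Finite X] (H K : Subgroup X) [H.Normal] :
    K.relIndex (K ⊔ H) = K.relIndex H := by
  have h₁ := relIndex_mul_relIndex (H ⊓ K) K (K ⊔ H) inf_le_right le_sup_left
  have h₂ := relIndex_mul_relIndex (H ⊓ K) H (K ⊔ H) inf_le_left le_sup_right
  rw [inf_relIndex_right, ← h₂, inf_relIndex_left, relIndex_sup_right] at h₁
  have : H.IsFiniteRelIndex K := isFiniteRelIndex_of_finiteIndex
  exact Nat.eq_of_mul_eq_mul_left (Nat.pos_of_ne_zero relIndex_ne_zero) (h₁.trans (mul_comm _ _))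

theorem le_of_coprime_card_index [Finite X] {H K : Subgroup X} [H.Normal]
    (h : (Nat.card H).Coprime K.index) : H ≤ K := by
  rw [← relIndex_eq_one]
  refine Nat.eq_one_of_dvd_coprimes h (relIndex_dvd_card K H) ?_
  rw [← relIndex_sup_left_of_normal]
  exact relIndex_dvd_index_of_le le_sup_left

theorem card_mul_card_le_card_sup [Finite X] {H K : Subgroup X} (h : Disjoint H K) :
    Nat.card H * Nat.card K ≤ Nat.card ↥(H ⊔ K) := by
  rw [← Nat.card_prod]
  refine Nat.card_le_card_of_injective
    (fun g => ⟨g.1 * g.2, mul_mem (mem_sup_left g.1.2) (mem_sup_right g.2.2)⟩) ?_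
  exact fun x y hxy => mul_injective_of_disjoint h (congrArg Subtype.val hxy)

def coprimeOrderPart (N : Subgroup X) [IsMulCommutative N] (p : ℕ) : Subgroup X where
  carrier := {x | x ∈ N ∧ (orderOf x).Coprime p}
  one_mem' := ⟨N.one_mem, by rw [orderOf_one]; exact Nat.coprime_one_left p⟩
  mul_mem' := fun {x y} ⟨hxN, hx⟩ ⟨hyN, hy⟩ =>
    ⟨mul_mem hxN hyN, Nat.Coprime.coprime_dvd_left
      (Commute.orderOf_mul_dvd_mul_orderOf (setLike_mul_comm hxN hyN)) (hx.mul_left hy)⟩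
  inv_mem' := fun {x} ⟨hxN, hx⟩ => ⟨inv_mem hxN, by rwa [orderOf_inv]⟩

variable {N : Subgroup X} [IsMulCommutative N] {p : ℕ}

instance coprimeOrderPart_normal [N.Normal] : (N.coprimeOrderPart p).Normal where
  conj_mem x := fun ⟨hxN, hx⟩ g => by
    have hconj : SemiconjBy g x (g * x * g⁻¹) := by simp [SemiconjBy, mul_assoc]
    exact ⟨Normal.conj_mem ‹_› x hxN g, SemiconjBy.orderOf_eq g hconj ▸ hx⟩

theorem coprime_card_coprimeOrderPart [Finite X] [Fact p.Prime] :
    (Nat.card (N.coprimeOrderPart p)).Coprime p := by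
  refine Nat.Coprime.symm ((Nat.Prime.coprime_iff_not_dvd Fact.out).mpr fun hdvd => ?_)
  obtain ⟨x, hx⟩ := exists_prime_orderOf_dvd_card' p hdvd
  have := x.2.2
  rw [orderOf_coe, hx, Nat.coprime_self] at this
  exact (Nat.Prime.one_lt Fact.out).ne' this

theorem isPGroup_of_coprimeOrderPart_eq_bot [Finite X] [Fact p.Prime]
    (h : N.coprimeOrderPart p = ⊥) : IsPGroup p N := by
  intro g
  set e := (orderOf (g : X)).factorization p
  refine ⟨e, Subtype.ext ?_⟩
  have hmem : (g : X) ^ p ^ e ∈ N.coprimeOrderPart p := by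
    refine ⟨pow_mem g.2 _, ?_⟩
    rw [orderOf_pow_of_dvd (pow_ne_zero _ (Nat.Prime.ne_zero Fact.out)) (Nat.ordProj_dvd _ p)]
    exact (Nat.coprime_ordCompl Fact.out (orderOf_pos (g : X)).ne').symm
  rw [h, mem_bot] at hmem
  simpa using hmem

end Subgroup

section Sylow

variable {p : ℕ} [Fact p.Prime]

theorem IsPGroup.le_normal_sylow [Finite X] {H : Subgroup X} (hH : IsPGroup p H) (P : Sylow p X)
    [P.Normal] : H ≤ P := by
  obtain ⟨Q, hQ⟩ := hH.exists_le_sylow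
  obtain ⟨g, rfl⟩ := MulAction.exists_smul_eq X P Q
  rwa [Sylow.smul_eq_of_normal] at hQ

theorem exists_normal_sylow_of_isPGroup_commutator [Finite X]
    (h : IsPGroup p (commutator X)) : ∃ P : Sylow p X, P.Normal := by
  let P : Sylow p (Abelianization X) := default
  refine ⟨P.comapOfKerIsPGroup Abelianization.of (Abelianization.ker_of X ▸ h)
    fun x _ => QuotientGroup.mk_surjective x, ?_⟩
  exact Subgroup.Normal.comap inferInstance _

theorem isPGroup_commutator_of_isComplement' [Finite X] {A B : Subgroup X} [IsMulCommutative A]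
    [IsMulCommutative B] (hAB : A.IsComplement' B) (hA : IsPGroup p A)
    (hB : ∀ N : Subgroup X, N.Normal → N ≤ B → N = ⊥) : IsPGroup p (commutator X) := by
  have := isMulCommutative_commutator_of_mul_eq_univ (Subgroup.IsComplement.mul_eq hAB)
  refine Subgroup.isPGroup_of_coprimeOrderPart_eq_bot (hB _ inferInstance ?_)
  refine Subgroup.le_of_coprime_card_index ?_
  obtain ⟨n, hn⟩ := IsPGroup.iff_card.mp hA
  rw [hAB.index_eq_card, hn]
  exact Subgroup.coprime_card_coprimeOrderPart.pow_right n

end Sylow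

end

theorem skew_product_sylow_normal_general
    (p : ℕ) (hp : p.Prime) {X : Type*} [Group X] [Finite X]
    (G : Subgroup X) (n : ℕ)
    (hGcard : Nat.card G = p ^ n)
    (hGcomm : ∀ a ∈ G, ∀ b ∈ G, a * b = b * a)
    (σ : X) (k m : ℕ) (hpk : ¬ p ∣ k)
    (hord : orderOf σ = k * p ^ m)
    (hfact : ∀ x : X, ∃ g ∈ G, ∃ i : ℤ, x = g * σ ^ i)
    (hinter : G ⊓ Subgroup.zpowers σ = ⊥)
    (hcorefree : ∀ N : Subgroup X, N.Normal → N ≤ Subgroup.zpowers σ → N = ⊥) :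
    (G ⊔ Subgroup.zpowers (σ ^ k)).Normal ∧
      Nat.card (G ⊔ Subgroup.zpowers (σ ^ k) : Subgroup X) = p ^ (n + m) := by
  have : Fact p.Prime := ⟨hp⟩
  have : IsMulCommutative G := .of_setLike_mul_comm hGcomm
  have hcompl : G.IsComplement' (Subgroup.zpowers σ) := by
    refine Subgroup.isComplement'_of_disjoint_and_mul_eq_univ (disjoint_iff.mpr hinter) ?_
    refine Set.eq_univ_of_forall fun x => ?_
    obtain ⟨g, hg, i, rfl⟩ := hfact x
    exact Set.mul_mem_mul hg (Subgroup.zpow_mem_zpowers σ i)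
  obtain ⟨P, hP⟩ := exists_normal_sylow_of_isPGroup_commutator
    (isPGroup_commutator_of_isComplement' hcompl (.of_card hGcard) hcorefree)
  have hk : k ≠ 0 := left_ne_zero_of_mul (hord ▸ (orderOf_pos σ).ne')
  have hσk : Nat.card (Subgroup.zpowers (σ ^ k)) = p ^ m := by
    rw [Nat.card_zpowers, orderOf_pow_of_dvd hk (hord ▸ dvd_mul_right k _), hord,
      Nat.mul_div_cancel_left _ (Nat.pos_of_ne_zero hk)]
  have hcardP : Nat.card P = p ^ (n + m) := by
    rw [P.card_eq_multiplicity, ← hcompl.card_mul_card, hGcard, Nat.card_zpowers, hord]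
    simp [Nat.factorization_mul, hp.ne_zero, hk, Nat.factorization_eq_zero_of_not_dvd hpk,
      hp.factorization_self]
  have hle : G ⊔ Subgroup.zpowers (σ ^ k) ≤ P :=
    sup_le ((IsPGroup.of_card hGcard).le_normal_sylow P) ((IsPGroup.of_card hσk).le_normal_sylow P)
  have hge : Nat.card P ≤ Nat.card ↥(G ⊔ Subgroup.zpowers (σ ^ k)) := by
    rw [hcardP, pow_add, ← hGcard, ← hσk]
    refine Subgroup.card_mul_card_le_card_sup (hcompl.disjoint.mono_right ?_)
    exact Subgroup.zpowers_le.mpr (Subgroup.pow_mem _ (Subgroup.mem_zpowers σ) k)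
  rw [Subgroup.eq_of_le_of_card_ge hle hge]
  exact ⟨hP, hcardP⟩

/-- In the skew-product setting, the subgroup `P = ⟨G, σ^k⟩` of `X` is normal in `X`
and has order `p^(n+m)`; in particular it is a normal Sylow `p`-subgroup of `X`. -/
theorem skew_product_sylow_normal
    (p : ℕ) (hp : p.Prime) {X : Type*} [Group X] [Finite X]
    (G : Subgroup X) (n : ℕ) (hn : 1 ≤ n)
    (hGcard : Nat.card G = p ^ n)
    (hGcomm : ∀ a ∈ G, ∀ b ∈ G, a * b = b * a)
    (hGexp : ∀ g ∈ G, g ^ p = 1)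
    (σ : X) (k m : ℕ) (hk : 1 ≤ k) (hpk : ¬ p ∣ k)
    (hord : orderOf σ = k * p ^ m)
    (hfact : ∀ x : X, ∃ g ∈ G, ∃ i : ℤ, x = g * σ ^ i)
    (hinter : G ⊓ Subgroup.zpowers σ = ⊥)
    (hcorefree : ∀ N : Subgroup X, N.Normal → N ≤ Subgroup.zpowers σ → N = ⊥) :
    (G ⊔ Subgroup.zpowers (σ ^ k)).Normal ∧
      Nat.card (G ⊔ Subgroup.zpowers (σ ^ k) : Subgroup X) = p ^ (n + m) :=
  skew_product_sylow_normal_general p hp G n hGcard hGcomm σ k m hpk hord hfact hinter hcorefree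
end

section
/- In the skew-product setting, the commutator subgroup [X, X] of X is a p-group; that is, the order of every element of the derived subgroup of X is a power of p. -/
section ItoAux

variable {X : Type*} [Group X]

private lemma conj_eq_of_comm {a c : X} (h : a * c = c * a) : c⁻¹ * a * c = a := by
  rw [mul_assoc, h, ← mul_assoc, inv_mul_cancel, one_mul]

private lemma conjA (a b a₁ c t : X) (h1 : a * a₁ = a₁ * a) (h2 : a * c = c * a)
    (hd : a₁⁻¹ * b * a₁ = c * t) :
    a₁⁻¹ * (a⁻¹ * b⁻¹ * a * b) * a₁ = a⁻¹ * t⁻¹ * a * t := by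
  have e2 : a₁⁻¹ * a * a₁ = a := conj_eq_of_comm (by rw [h1])
  have e3 : a₁⁻¹ * a⁻¹ * a₁ = a⁻¹ := by
    have h : (a₁⁻¹ * a * a₁)⁻¹ = a⁻¹ := by rw [e2]
    calc a₁⁻¹ * a⁻¹ * a₁ = (a₁⁻¹ * a * a₁)⁻¹ := by group
    _ = a⁻¹ := h
  have e4 : a₁⁻¹ * b⁻¹ * a₁ = t⁻¹ * c⁻¹ := by
    have h : (a₁⁻¹ * b * a₁)⁻¹ = (c * t)⁻¹ := by rw [hd]
    calc a₁⁻¹ * b⁻¹ * a₁ = (a₁⁻¹ * b * a₁)⁻¹ := by group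
    _ = t⁻¹ * c⁻¹ := by rw [h, mul_inv_rev]
  have h2' : c⁻¹ * a * c = a := conj_eq_of_comm h2
  calc a₁⁻¹ * (a⁻¹ * b⁻¹ * a * b) * a₁
      = (a₁⁻¹ * a⁻¹ * a₁) * (a₁⁻¹ * b⁻¹ * a₁) * (a₁⁻¹ * a * a₁) * (a₁⁻¹ * b * a₁) := by group
  _ = a⁻¹ * (t⁻¹ * c⁻¹) * a * (c * t) := by rw [e2, e3, e4, hd]
  _ = a⁻¹ * t⁻¹ * (c⁻¹ * a * c) * t := by group
  _ = a⁻¹ * t⁻¹ * a * t := by rw [h2']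

private lemma conjB (a b b₁ s a₂ : X) (h1 : b * b₁ = b₁ * b) (h2 : b * s = s * b)
    (hd : b₁⁻¹ * a * b₁ = s * a₂) :
    b₁⁻¹ * (a⁻¹ * b⁻¹ * a * b) * b₁ = a₂⁻¹ * b⁻¹ * a₂ * b := by
  have e2 : b₁⁻¹ * b * b₁ = b := conj_eq_of_comm (by rw [h1])
  have e3 : b₁⁻¹ * b⁻¹ * b₁ = b⁻¹ := by
    have h : (b₁⁻¹ * b * b₁)⁻¹ = b⁻¹ := by rw [e2]
    calc b₁⁻¹ * b⁻¹ * b₁ = (b₁⁻¹ * b * b₁)⁻¹ := by group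
    _ = b⁻¹ := h
  have e4 : b₁⁻¹ * a⁻¹ * b₁ = a₂⁻¹ * s⁻¹ := by
    have h : (b₁⁻¹ * a * b₁)⁻¹ = (s * a₂)⁻¹ := by rw [hd]
    calc b₁⁻¹ * a⁻¹ * b₁ = (b₁⁻¹ * a * b₁)⁻¹ := by group
    _ = a₂⁻¹ * s⁻¹ := by rw [h, mul_inv_rev]
  have h2' : s⁻¹ * b⁻¹ * s = b⁻¹ := by
    have hb : b⁻¹ * s = s * b⁻¹ := by
      calc b⁻¹ * s = b⁻¹ * (s * b) * b⁻¹ := by group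
      _ = b⁻¹ * (b * s) * b⁻¹ := by rw [← h2]
      _ = s * b⁻¹ := by group
    exact conj_eq_of_comm hb
  calc b₁⁻¹ * (a⁻¹ * b⁻¹ * a * b) * b₁
      = (b₁⁻¹ * a⁻¹ * b₁) * (b₁⁻¹ * b⁻¹ * b₁) * (b₁⁻¹ * a * b₁) * (b₁⁻¹ * b * b₁) := by group
  _ = (a₂⁻¹ * s⁻¹) * b⁻¹ * (s * a₂) * b := by rw [e2, e3, e4, hd]
  _ = a₂⁻¹ * (s⁻¹ * b⁻¹ * s) * a₂ * b := by group
  _ = a₂⁻¹ * b⁻¹ * a₂ * b := by rw [h2']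

private lemma commute_of_conj_eq {u x y : X} (h : x⁻¹ * u * x = y⁻¹ * u * y) :
    Commute u (x * y⁻¹) := by
  have h2 : u * x = x * (y⁻¹ * u * y) := by
    rw [← h]; group
  show u * (x * y⁻¹) = (x * y⁻¹) * u
  calc u * (x * y⁻¹) = (u * x) * y⁻¹ := by group
  _ = (x * (y⁻¹ * u * y)) * y⁻¹ := by rw [h2]
  _ = (x * y⁻¹) * u := by group

private lemma comm_of_comm_inv_eq_one {Q : Type*} [Group Q] {x y : Q}
    (h : x⁻¹ * y⁻¹ * x * y = 1) : x * y = y * x := by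
  calc x * y = (y * x) * (x⁻¹ * y⁻¹ * x * y) := by group
  _ = y * x := by rw [h, mul_one]

/-- Itô's theorem (commutativity part): if `X = A * B` with `A`, `B` abelian subgroups,
then any two elements of the commutator subgroup of `X` commute. -/
theorem ito_commutator_comm (A B : Subgroup X)
    (hA : ∀ a ∈ A, ∀ a' ∈ A, a * a' = a' * a)
    (hB : ∀ b ∈ B, ∀ b' ∈ B, b * b' = b' * b)
    (hAB : ∀ x : X, ∃ a ∈ A, ∃ b ∈ B, x = a * b) :
    ∀ x ∈ commutator X, ∀ y ∈ commutator X, x * y = y * x := by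
  have hBA : ∀ x : X, ∃ b ∈ B, ∃ a ∈ A, x = b * a := by
    intro x
    obtain ⟨a, ha, b, hb, h⟩ := hAB x⁻¹
    refine ⟨b⁻¹, inv_mem hb, a⁻¹, inv_mem ha, ?_⟩
    rw [← inv_inv x, h, mul_inv_rev]
  set S : Set X := {z | ∃ a ∈ A, ∃ b ∈ B, z = a⁻¹ * b⁻¹ * a * b} with hSdef
  have hmemS : ∀ a ∈ A, ∀ b ∈ B, a⁻¹ * b⁻¹ * a * b ∈ S := fun a ha b hb => ⟨a, ha, b, hb, rfl⟩
  have stepA : ∀ a ∈ A, ∀ b ∈ B, ∀ a₁ ∈ A,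
      ∃ t ∈ B, a₁⁻¹ * (a⁻¹ * b⁻¹ * a * b) * a₁ = a⁻¹ * t⁻¹ * a * t := by
    intro a ha b hb a₁ ha₁
    obtain ⟨c, hc, t, ht, hd⟩ := hAB (a₁⁻¹ * b * a₁)
    exact ⟨t, ht, conjA a b a₁ c t (hA a ha a₁ ha₁) (hA a ha c hc) hd⟩
  have stepB : ∀ a : X, ∀ b ∈ B, ∀ b₁ ∈ B,
      ∃ a₂ ∈ A, b₁⁻¹ * (a⁻¹ * b⁻¹ * a * b) * b₁ = a₂⁻¹ * b⁻¹ * a₂ * b := by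
    intro a b hb b₁ hb₁
    obtain ⟨s, hs, a₂, ha₂, hd⟩ := hBA (b₁⁻¹ * a * b₁)
    exact ⟨a₂, ha₂, conjB a b b₁ s a₂ (hB b hb b₁ hb₁) (hB b hb s hs) hd⟩
  have key : ∀ a ∈ A, ∀ b ∈ B, ∀ a₁ ∈ A, ∀ b₁ ∈ B,
      Commute (a⁻¹ * b⁻¹ * a * b) (a₁⁻¹ * b₁⁻¹ * a₁ * b₁) := by
    intro a ha b hb a₁' ha₁' b₁' hb₁'
    have ha₁ : a₁'⁻¹ ∈ A := inv_mem ha₁'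
    have hb₁ : b₁'⁻¹ ∈ B := inv_mem hb₁'
    obtain ⟨c, hc, t, ht, hct⟩ := hAB ((a₁'⁻¹)⁻¹ * b * a₁'⁻¹)
    obtain ⟨s, hs, a₂, ha₂, hsa⟩ := hBA ((b₁'⁻¹)⁻¹ * a * b₁'⁻¹)
    have P1 : (a₁'⁻¹)⁻¹ * (a⁻¹ * b⁻¹ * a * b) * a₁'⁻¹ = a⁻¹ * t⁻¹ * a * t :=
      conjA a b a₁'⁻¹ c t (hA a ha a₁'⁻¹ ha₁) (hA a ha c hc) hct
    have P2 : (b₁'⁻¹)⁻¹ * (a⁻¹ * t⁻¹ * a * t) * b₁'⁻¹ = a₂⁻¹ * t⁻¹ * a₂ * t :=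
      conjB a t b₁'⁻¹ s a₂ (hB t ht b₁'⁻¹ hb₁) (hB t ht s hs) hsa
    have P3 : (b₁'⁻¹)⁻¹ * (a⁻¹ * b⁻¹ * a * b) * b₁'⁻¹ = a₂⁻¹ * b⁻¹ * a₂ * b :=
      conjB a b b₁'⁻¹ s a₂ (hB b hb b₁'⁻¹ hb₁) (hB b hb s hs) hsa
    have P4 : (a₁'⁻¹)⁻¹ * (a₂⁻¹ * b⁻¹ * a₂ * b) * a₁'⁻¹ = a₂⁻¹ * t⁻¹ * a₂ * t :=
      conjA a₂ b a₁'⁻¹ c t (hA a₂ ha₂ a₁'⁻¹ ha₁) (hA a₂ ha₂ c hc) hct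
    have E : (a₁'⁻¹ * b₁'⁻¹)⁻¹ * (a⁻¹ * b⁻¹ * a * b) * (a₁'⁻¹ * b₁'⁻¹)
        = (b₁'⁻¹ * a₁'⁻¹)⁻¹ * (a⁻¹ * b⁻¹ * a * b) * (b₁'⁻¹ * a₁'⁻¹) := by
      have L : (a₁'⁻¹ * b₁'⁻¹)⁻¹ * (a⁻¹ * b⁻¹ * a * b) * (a₁'⁻¹ * b₁'⁻¹)
          = (b₁'⁻¹)⁻¹ * ((a₁'⁻¹)⁻¹ * (a⁻¹ * b⁻¹ * a * b) * a₁'⁻¹) * b₁'⁻¹ := by group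
      have R : (b₁'⁻¹ * a₁'⁻¹)⁻¹ * (a⁻¹ * b⁻¹ * a * b) * (b₁'⁻¹ * a₁'⁻¹)
          = (a₁'⁻¹)⁻¹ * ((b₁'⁻¹)⁻¹ * (a⁻¹ * b⁻¹ * a * b) * b₁'⁻¹) * a₁'⁻¹ := by group
      rw [L, R, P1, P2, P3, P4]
    have hcomm := commute_of_conj_eq E
    have hw : (a₁'⁻¹ * b₁'⁻¹) * (b₁'⁻¹ * a₁'⁻¹)⁻¹ = a₁'⁻¹ * b₁'⁻¹ * a₁' * b₁' := by
      group
    rwa [hw] at hcomm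
  set N : Subgroup X := Subgroup.closure S with hNdef
  have hSN : S ⊆ (N : Set X) := Subgroup.subset_closure
  have hNS : ∀ y ∈ N, ∀ x ∈ S, Commute x y := by
    intro y hy
    refine Subgroup.closure_induction (fun z hz => ?_) ?_ (fun z w _ _ ihz ihw => ?_)
      (fun z _ ihz => ?_) hy
    · intro x hx
      obtain ⟨a, ha, b, hb, rfl⟩ := hx
      obtain ⟨a', ha', b', hb', rfl⟩ := hz
      exact key a ha b hb a' ha' b' hb'
    · intro x _; exact Commute.one_right x
    · intro x hx; exact (ihz x hx).mul_right (ihw x hx)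
    · intro x hx; exact (ihz x hx).inv_right
  have hNcomm : ∀ x ∈ N, ∀ y ∈ N, Commute x y := by
    intro x hx
    refine Subgroup.closure_induction (fun z hz y hy => hNS y hy z hz)
      (fun y _ => Commute.one_left y) (fun z w _ _ ihz ihw y hy => (ihz y hy).mul_left (ihw y hy))
      (fun z _ ihz y hy => (ihz y hy).inv_left) hx
  have hSconj : ∀ g : X, ∀ z ∈ S, g * z * g⁻¹ ∈ S := by
    intro g z hz
    obtain ⟨a₁, ha₁, b₁, hb₁, hg⟩ := hAB g⁻¹
    have hg' : g = (a₁ * b₁)⁻¹ := by rw [← hg, inv_inv]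
    obtain ⟨a, ha, b, hb, rfl⟩ := hz
    obtain ⟨t, ht, hA1⟩ := stepA a ha b hb a₁ ha₁
    obtain ⟨a₂, ha₂, hB1⟩ := stepB a t ht b₁ hb₁
    have hcalc : g * (a⁻¹ * b⁻¹ * a * b) * g⁻¹
        = b₁⁻¹ * (a₁⁻¹ * (a⁻¹ * b⁻¹ * a * b) * a₁) * b₁ := by
      rw [hg']; group
    rw [hcalc, hA1, hB1]
    exact hmemS a₂ ha₂ t ht
  have hNnormal : N.Normal := by
    constructor
    intro x hx g
    refine Subgroup.closure_induction (fun z hz => hSN (hSconj g z hz)) ?_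
      (fun z w _ _ ihz ihw => ?_) (fun z _ ihz => ?_) hx
    · simpa using N.one_mem
    · have h : g * (z * w) * g⁻¹ = (g * z * g⁻¹) * (g * w * g⁻¹) := by group
      rw [h]; exact N.mul_mem ihz ihw
    · have h : g * z⁻¹ * g⁻¹ = (g * z * g⁻¹)⁻¹ := by group
      rw [h]; exact N.inv_mem ihz
  haveI := hNnormal
  have hcommutator_le : commutator X ≤ N := by
    rw [commutator_def, Subgroup.commutator_le]
    intro g₁ _ g₂ _
    apply (QuotientGroup.eq_one_iff _).mp
    have hcim : ∀ x y : X, x⁻¹ * y⁻¹ * x * y ∈ N →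
        (x : X ⧸ N) * (y : X ⧸ N) = (y : X ⧸ N) * (x : X ⧸ N) := by
      intro x y hxy
      have h1 : ((x⁻¹ * y⁻¹ * x * y : X) : X ⧸ N) = 1 := (QuotientGroup.eq_one_iff _).mpr hxy
      have h2 : (x : X ⧸ N)⁻¹ * (y : X ⧸ N)⁻¹ * (x : X ⧸ N) * (y : X ⧸ N) = 1 := by
        rw [← QuotientGroup.mk_inv, ← QuotientGroup.mk_inv, ← QuotientGroup.mk_mul,
          ← QuotientGroup.mk_mul, ← QuotientGroup.mk_mul]
        exact h1
      exact comm_of_comm_inv_eq_one h2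
    obtain ⟨a, ha, b, hb, h1⟩ := hAB g₁
    obtain ⟨a', ha', b', hb', h2⟩ := hAB g₂
    have hg12 : (g₁ : X ⧸ N) * (g₂ : X ⧸ N) = (g₂ : X ⧸ N) * (g₁ : X ⧸ N) := by
      have caa : Commute (a : X ⧸ N) (a' : X ⧸ N) := by
        show (a : X ⧸ N) * a' = (a' : X ⧸ N) * a
        rw [← QuotientGroup.mk_mul, ← QuotientGroup.mk_mul, hA a ha a' ha']
      have cbb : Commute (b : X ⧸ N) (b' : X ⧸ N) := by
        show (b : X ⧸ N) * b' = (b' : X ⧸ N) * b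
        rw [← QuotientGroup.mk_mul, ← QuotientGroup.mk_mul, hB b hb b' hb']
      have cab' : Commute (a : X ⧸ N) (b' : X ⧸ N) := hcim a b' (hSN (hmemS a ha b' hb'))
      have ca'b : Commute (a' : X ⧸ N) (b : X ⧸ N) := hcim a' b (hSN (hmemS a' ha' b hb))
      have c1 : Commute (a : X ⧸ N) ((a' : X ⧸ N) * b') := caa.mul_right cab'
      have c2 : Commute (b : X ⧸ N) ((a' : X ⧸ N) * b') := ca'b.symm.mul_right cbb
      have c3 : Commute ((a : X ⧸ N) * b) ((a' : X ⧸ N) * b') := c1.mul_left c2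
      rw [h1, h2]
      rw [QuotientGroup.mk_mul, QuotientGroup.mk_mul]
      exact c3
    simp only [commutatorElement_def, QuotientGroup.mk_mul, QuotientGroup.mk_inv]
    rw [hg12]
    group
  exact fun x hx y hy => hNcomm x (hcommutator_le hx) y (hcommutator_le hy)

/-- The subgroup of elements of the (abelian) commutator subgroup whose order is coprime
to `p`. -/
private def coprimeTorsion (p : ℕ)
    (hcomm : ∀ x ∈ commutator X, ∀ y ∈ commutator X, x * y = y * x) : Subgroup X where
  carrier := {x : X | x ∈ commutator X ∧ (orderOf x).Coprime p}
  one_mem' := ⟨(commutator X).one_mem, by simp [Nat.coprime_one_left]⟩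
  mul_mem' := by
    rintro x y ⟨hx1, hx2⟩ ⟨hy1, hy2⟩
    refine ⟨(commutator X).mul_mem hx1 hy1, ?_⟩
    have hcxy : Commute x y := hcomm x hx1 y hy1
    exact Nat.Coprime.coprime_dvd_left (Commute.orderOf_mul_dvd_mul_orderOf hcxy)
      (Nat.Coprime.mul hx2 hy2)
  inv_mem' := by
    rintro x ⟨hx1, hx2⟩
    exact ⟨(commutator X).inv_mem hx1, by rwa [orderOf_inv]⟩

end ItoAux

/-- In the skew-product setting, the derived subgroup of X is a p-group. -/
theorem skew_product_commutator_isPGroup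
    (p : ℕ) (hp : p.Prime) {X : Type*} [Group X] [Finite X]
    (G : Subgroup X) (n : ℕ) (hn : 1 ≤ n)
    (hGcard : Nat.card G = p ^ n)
    (hGcomm : ∀ a ∈ G, ∀ b ∈ G, a * b = b * a)
    (hGexp : ∀ g ∈ G, g ^ p = 1)
    (σ : X) (k m : ℕ) (hk : 1 ≤ k) (hpk : ¬ p ∣ k)
    (hord : orderOf σ = k * p ^ m)
    (hfact : ∀ x : X, ∃ g ∈ G, ∃ i : ℤ, x = g * σ ^ i)
    (hinter : G ⊓ Subgroup.zpowers σ = ⊥)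
    (hcorefree : ∀ N : Subgroup X, N.Normal → N ≤ Subgroup.zpowers σ → N = ⊥) :
    IsPGroup p (commutator X) := by
  haveI : Fact p.Prime := ⟨hp⟩
  have hB : ∀ b ∈ Subgroup.zpowers σ, ∀ b' ∈ Subgroup.zpowers σ, b * b' = b' * b := by
    intro b hb b' hb'
    obtain ⟨i, rfl⟩ := Subgroup.mem_zpowers_iff.mp hb
    obtain ⟨j, rfl⟩ := Subgroup.mem_zpowers_iff.mp hb'
    exact ((Commute.refl σ).zpow_zpow i j).eq
  have hAB : ∀ x : X, ∃ a ∈ G, ∃ b ∈ Subgroup.zpowers σ, x = a * b := by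
    intro x
    obtain ⟨g, hg, i, rfl⟩ := hfact x
    exact ⟨g, hg, σ ^ i, Subgroup.mem_zpowers_iff.mpr ⟨i, rfl⟩, rfl⟩
  have hcomm := ito_commutator_comm G (Subgroup.zpowers σ) hGcomm hB hAB
  set T := coprimeTorsion p hcomm with hTdef
  have hcn : (commutator X).Normal := inferInstance
  have hTn : T.Normal := by
    constructor
    intro x hx g
    obtain ⟨hx1, hx2⟩ := hx
    refine ⟨hcn.conj_mem x hx1 g, ?_⟩
    have horder : orderOf (g * x * g⁻¹) = orderOf x := by
      have h := orderOf_injective (MulAut.conj g).toMonoidHom (MulEquiv.injective _) x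
      simpa [MulAut.conj_apply] using h
    rwa [horder]
  -- cardinality of X
  have hX : Nat.card X = p ^ n * (k * p ^ m) := by
    have hbij : Function.Bijective
        (fun gy : G × Subgroup.zpowers σ => (gy.1 : X) * (gy.2 : X)) := by
      constructor
      · rintro ⟨g1, y1⟩ ⟨g2, y2⟩ h
        simp only at h
        have e : (g2 : X)⁻¹ * g1 = (y2 : X) * (y1 : X)⁻¹ := by
          calc (g2 : X)⁻¹ * g1 = (g2 : X)⁻¹ * ((g1 : X) * y1) * (y1 : X)⁻¹ := by group
          _ = (g2 : X)⁻¹ * ((g2 : X) * y2) * (y1 : X)⁻¹ := by rw [h]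
          _ = (y2 : X) * (y1 : X)⁻¹ := by group
        have hmem : (g2 : X)⁻¹ * g1 ∈ G ⊓ Subgroup.zpowers σ := by
          constructor
          · exact G.mul_mem (G.inv_mem g2.2) g1.2
          · rw [e]
            exact (Subgroup.zpowers σ).mul_mem y2.2 ((Subgroup.zpowers σ).inv_mem y1.2)
        rw [hinter, Subgroup.mem_bot] at hmem
        have hg : (g1 : X) = g2 := by
          have := hmem
          calc (g1 : X) = (g2 : X) * ((g2 : X)⁻¹ * g1) := by group
          _ = g2 := by rw [this, mul_one]
        have hy : (y1 : X) = y2 := by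
          have h' : (g1 : X) * y1 = (g1 : X) * y2 := by rw [h, hg]
          exact mul_left_cancel h'
        exact Prod.ext (Subtype.ext hg) (Subtype.ext hy)
      · intro x
        obtain ⟨g, hg, i, rfl⟩ := hfact x
        exact ⟨(⟨g, hg⟩, ⟨σ ^ i, Subgroup.mem_zpowers_iff.mpr ⟨i, rfl⟩⟩), rfl⟩
    have hcard := Nat.card_congr (Equiv.ofBijective _ hbij)
    rw [Nat.card_prod, hGcard, Nat.card_zpowers, hord] at hcard
    exact hcard.symm
  -- card T is coprime to p
  have hTcard : ¬ p ∣ Nat.card T := by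
    intro hdvd
    obtain ⟨t, ht⟩ := exists_prime_orderOf_dvd_card' p hdvd
    have h1 : orderOf (t : X) = p := by rw [Subgroup.orderOf_coe, ht]
    obtain ⟨_, hcop⟩ := t.2
    rw [h1] at hcop
    rw [Nat.Coprime, Nat.gcd_self] at hcop
    exact hp.one_lt.ne' hcop
  -- the cyclic p'-Hall part of ⟨σ⟩
  have hppos : 0 < p ^ m := pow_pos hp.pos m
  have hcord : orderOf (σ ^ p ^ m) = k := by
    rw [orderOf_pow, hord, Nat.gcd_eq_right (dvd_mul_left (p ^ m) k),
      Nat.mul_div_cancel _ hppos]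
  set C := Subgroup.zpowers (σ ^ p ^ m) with hCdef
  have hCcard : Nat.card C = k := by rw [hCdef, Nat.card_zpowers, hcord]
  haveI := hTn
  set U := C ⊔ T with hUdef
  have hUcard : Nat.card U = Nat.card (U ⧸ T.subgroupOf U) * Nat.card T := by
    rw [Subgroup.card_eq_card_quotient_mul_card_subgroup (T.subgroupOf U)]
    congr 1
    exact Nat.card_congr (Subgroup.subgroupOfEquivOfLe le_sup_right).toEquiv
  have hquot : Nat.card (U ⧸ T.subgroupOf U) ∣ k := by
    have e := QuotientGroup.quotientInfEquivProdNormalQuotient C T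
    calc Nat.card (U ⧸ T.subgroupOf U) = Nat.card (C ⧸ T.subgroupOf C) :=
      (Nat.card_congr e.toEquiv).symm
    _ ∣ Nat.card C := Subgroup.card_quotient_dvd_card _
    _ = k := hCcard
  have hUdvd : Nat.card U ∣ k := by
    have h1 : Nat.card U ∣ Nat.card X := Subgroup.card_subgroup_dvd_card U
    rw [hX] at h1
    have h2 : Nat.card U ∣ k * p ^ (n + m) := by
      have he : p ^ n * (k * p ^ m) = k * p ^ (n + m) := by rw [pow_add]; ring
      rwa [he] at h1
    have hnp : ¬ p ∣ Nat.card U := by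
      rw [hUcard]
      intro hdvd
      rcases (Nat.Prime.dvd_mul hp).mp hdvd with h | h
      · exact hpk (h.trans hquot)
      · exact hTcard h
    have hcop : Nat.Coprime (Nat.card U) (p ^ (n + m)) :=
      Nat.Coprime.pow_right _ (Nat.coprime_comm.mp ((Nat.Prime.coprime_iff_not_dvd hp).mpr hnp))
    exact Nat.Coprime.dvd_of_dvd_mul_right hcop h2
  have hUeqC : C = U := by
    apply Subgroup.eq_of_le_of_card_ge le_sup_left
    rw [hCcard]
    exact Nat.le_of_dvd (by omega) hUdvd
  have hTsub : T ≤ Subgroup.zpowers σ := by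
    have h1 : T ≤ U := le_sup_right
    rw [← hUeqC] at h1
    refine h1.trans ?_
    rw [hCdef]
    exact Subgroup.zpowers_le.mpr (Subgroup.mem_zpowers_iff.mpr ⟨(p ^ m : ℕ), by
      rw [zpow_natCast]⟩)
  have hTbot : T = ⊥ := hcorefree T hTn hTsub
  -- conclude
  intro g
  have hx : (g : X) ∈ commutator X := g.2
  have ho : orderOf (g : X) ≠ 0 := (orderOf_pos (g : X)).ne'
  refine ⟨(orderOf (g : X)).factorization p, ?_⟩
  have hyT : (g : X) ^ p ^ ((orderOf (g : X)).factorization p) ∈ T := by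
    refine ⟨(commutator X).pow_mem hx _, ?_⟩
    rw [orderOf_pow, Nat.gcd_eq_right (Nat.ordProj_dvd _ _)]
    exact (Nat.coprime_ordCompl hp ho).symm
  rw [hTbot, Subgroup.mem_bot] at hyT
  exact Subtype.ext (by push_cast; exact hyT)
end

section
/- Let p be an odd prime and let G be a finite group generated by two elements a and b such that a has order p^n for some n ≥ 1, b has order p, the cyclic subgroup ⟨a⟩ is normal in G, and ⟨a⟩ ∩ ⟨b⟩ = 1 (so G is a semidirect product Z_(p^n) ⋊ Z_p of order p^(n+1)). Then the set {g in G : g^p = 1} equals the subgroup of G generated by a^(p^(n-1)) and b, and this subgroup is elementary abelian of order p^2 (it is the internal direct product ⟨a^(p^(n-1))⟩ × ⟨b⟩). -/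
open Finset Subgroup

/-!
Put `c = a ^ p ^ (n - 1)`, an element of order `p`. Conjugation by `b` acts on `⟨a⟩` as
`a ↦ a ^ r` with `r ^ p ≡ 1 [ZMOD p ^ n]`, so `r ≡ 1 [ZMOD p]` by Fermat and `b` centralises
`c`; hence `⟨c, b⟩ ≅ ⟨c⟩ × ⟨b⟩` is elementary abelian of order `p ^ 2`. Conversely, write
`g = a ^ i * b ^ j`. If conjugation by `b ^ j` is `a ↦ a ^ s`, then
`g ^ p = a ^ (i * (1 + s + ⋯ + s ^ (p - 1)))`, and since `s ≡ 1 [ZMOD p]` and `p` is odd, that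
geometric sum is `p` times a unit modulo `p`. So `g ^ p = 1` forces `p ^ (n - 1) ∣ i`,
i.e. `a ^ i ∈ ⟨c⟩`.
-/

theorem dvd_sub_one_of_dvd_pow_sub_one {p : ℕ} (hp : p.Prime) {r : ℤ}
    (h : (p : ℤ) ∣ r ^ p - 1) : (p : ℤ) ∣ r - 1 := by
  have hfermat : (p : ℤ) ∣ r - r ^ p := (Int.ModEq.pow_prime_eq_self hp r).dvd
  simpa using dvd_add hfermat h

theorem exists_geom_sum_eq_of_dvd_sub_one {p : ℕ} (hp : Odd p) {s : ℤ}
    (h : (p : ℤ) ∣ s - 1) :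
    ∃ u : ℤ, ∑ t ∈ range p, s ^ t = p * (1 + p * u) := by
  obtain ⟨e, he⟩ := h
  obtain ⟨u, hu⟩ := odd_sq_dvd_geom_sum₂_sub (1 : ℤ) e hp
  refine ⟨u, ?_⟩
  simp only [one_pow, mul_one, ← he, add_sub_cancel] at hu
  linear_combination hu

section Conjugation

variable {G : Type*} [Group G] {x y : G} {s : ℤ}

theorem conj_zpow_of_conj_eq_zpow (h : y * x * y⁻¹ = x ^ s) (i : ℤ) :
    y * x ^ i * y⁻¹ = (x ^ i) ^ s := by
  simpa only [MulAut.conj_apply, h, ← zpow_mul, mul_comm i s] using map_zpow (MulAut.conj y) x i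

theorem pow_conj_of_conj_eq_zpow (h : y * x * y⁻¹ = x ^ s) (k : ℕ) :
    y ^ k * x * (y ^ k)⁻¹ = x ^ s ^ k := by
  induction k with
  | zero => simp
  | succ k ih =>
    calc y ^ (k + 1) * x * (y ^ (k + 1))⁻¹ = y * (y ^ k * x * (y ^ k)⁻¹) * y⁻¹ := by group
      _ = x ^ s ^ (k + 1) := by rw [ih, conj_zpow_of_conj_eq_zpow h, ← zpow_mul, pow_succ]

theorem mul_pow_of_conj_eq_zpow (h : y * x * y⁻¹ = x ^ s) (k : ℕ) :
    (x * y) ^ k = x ^ (∑ t ∈ range k, s ^ t) * y ^ k := by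
  induction k with
  | zero => simp
  | succ k ih =>
    calc (x * y) ^ (k + 1)
        = x ^ (∑ t ∈ range k, s ^ t) * (y ^ k * x * (y ^ k)⁻¹) * y ^ (k + 1) := by
          rw [pow_succ, ih]; group
      _ = x ^ (∑ t ∈ range (k + 1), s ^ t) * y ^ (k + 1) := by
          rw [pow_conj_of_conj_eq_zpow h, ← zpow_add, sum_range_succ]

theorem dvd_sub_one_of_conj_eq_zpow {p : ℕ} (hp : p.Prime) (h : y * x * y⁻¹ = x ^ s)
    (hy : y ^ p = 1) (hx : p ∣ orderOf x) : (p : ℤ) ∣ s - 1 := by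
  have hfix : x ^ (s ^ p - 1) = 1 := by
    rw [zpow_sub_one, ← pow_conj_of_conj_eq_zpow h, hy]; group
  exact dvd_sub_one_of_dvd_pow_sub_one hp
    ((Int.natCast_dvd_natCast.mpr hx).trans (orderOf_dvd_iff_zpow_eq_one.mpr hfix))

theorem commute_of_conj_eq_zpow (h : y * x * y⁻¹ = x ^ s) (hs : (orderOf x : ℤ) ∣ s - 1) :
    Commute y x := by
  have hxs : x ^ s = x := by
    rw [← mul_inv_eq_one, ← zpow_sub_one]; exact orderOf_dvd_iff_zpow_eq_one.mp hs
  exact mul_inv_eq_iff_eq_mul.mp (h.trans hxs)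

end Conjugation

section ClosurePair

variable {G : Type*} [Group G] {x y : G}

theorem closure_pair_eq_sup_zpowers (x y : G) : closure {x, y} = zpowers x ⊔ zpowers y := by
  rw [Set.insert_eq, Subgroup.closure_union, zpowers_eq_closure, zpowers_eq_closure]

theorem mul_comm_of_mem_closure_pair (hxy : Commute x y) {g h : G}
    (hg : g ∈ closure {x, y}) (hh : h ∈ closure {x, y}) : g * h = h * g := by
  have hcomm : ∀ u ∈ ({x, y} : Set G), ∀ v ∈ ({x, y} : Set G), u * v = v * u := by
    rintro u (rfl | rfl) v (rfl | rfl)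
    exacts [rfl, hxy, hxy.symm, rfl]
  have hle := closure_le_centralizer_centralizer ({x, y} : Set G)
  exact Set.centralizer_centralizer_comm_of_comm hcomm g (hle hg) h (hle hh)

theorem pow_eq_one_of_mem_closure_pair {p : ℕ} (hxy : Commute x y) (hx : x ^ p = 1)
    (hy : y ^ p = 1) {g : G} (hg : g ∈ closure {x, y}) : g ^ p = 1 := by
  induction hg using closure_induction with
  | mem u hu => rcases hu with rfl | rfl <;> assumption
  | one => exact one_pow p
  | mul u v hu hv hup hvp =>
    rw [Commute.mul_pow (mul_comm_of_mem_closure_pair hxy hu hv), hup, hvp, one_mul]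
  | inv u _ hup => rw [inv_pow, hup, inv_one]

theorem card_closure_pair_of_commute (hxy : Commute x y)
    (hdisj : Disjoint (zpowers x) (zpowers y)) :
    Nat.card (closure {x, y}) = orderOf x * orderOf y := by
  have hcomm : ∀ (u : zpowers x) (v : zpowers y),
      Commute ((zpowers x).subtype u) ((zpowers y).subtype v) := by
    rintro ⟨-, i, rfl⟩ ⟨-, j, rfl⟩
    exact hxy.zpow_zpow i j
  set φ := MonoidHom.noncommCoprod _ _ hcomm
  have hφ : Function.Injective φ := (MonoidHom.noncommCoprod_injective _ _ hcomm).mpr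
    ⟨subtype_injective _, subtype_injective _, by simpa only [range_subtype] using hdisj⟩
  rw [closure_pair_eq_sup_zpowers, ← range_subtype (zpowers x), ← range_subtype (zpowers y),
    ← MonoidHom.noncommCoprod_range _ _ hcomm,
    ← Nat.card_congr (MonoidHom.ofInjective hφ).toEquiv, Nat.card_prod, Nat.card_zpowers,
    Nat.card_zpowers]

end ClosurePair

section Metacyclic

variable {G : Type*} [Group G] {p m : ℕ} {a b : G}

theorem zpow_mem_zpowers_of_zpow_eq_one (hp : p.Prime) (ha : orderOf a = p ^ (m + 1))
    {i u : ℤ} (h : (a ^ i) ^ (p * (1 + p * u)) = 1) : a ^ i ∈ zpowers (a ^ p ^ m) := by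
  have hdvd : (p : ℤ) ^ m * p ∣ i * (1 + p * u) * p := by
    rw [← pow_succ, mul_assoc, mul_comm _ (p : ℤ)]
    exact_mod_cast ha ▸ orderOf_dvd_iff_zpow_eq_one.mpr (by rwa [← zpow_mul] at h)
  have hcop : IsCoprime ((p : ℤ) ^ m) (1 + p * u) := IsCoprime.pow_left ⟨-u, 1, by ring⟩
  obtain ⟨q, rfl⟩ := hcop.dvd_of_dvd_mul_right
    ((mul_dvd_mul_iff_right (by exact_mod_cast hp.ne_zero)).mp hdvd)
  exact ⟨q, by rw [zpow_mul, ← zpow_natCast]; norm_cast⟩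

theorem zpow_mem_zpowers_of_mul_zpow_pow_eq_one (hp : p.Prime) (hodd : p ≠ 2)
    (ha : orderOf a = p ^ (m + 1)) (hb : b ^ p = 1) (haN : (zpowers a).Normal) {i j : ℤ}
    (h : (a ^ i * b ^ j) ^ p = 1) : a ^ i ∈ zpowers (a ^ p ^ m) := by
  obtain ⟨s, hs⟩ := mem_zpowers_iff.mp (haN.conj_mem a (mem_zpowers a) (b ^ j))
  have hbj : (b ^ j) ^ p = 1 := by
    rw [← zpow_natCast, ← zpow_mul, mul_comm, zpow_mul, zpow_natCast, hb, one_zpow]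
  have hs1 : (p : ℤ) ∣ s - 1 :=
    dvd_sub_one_of_conj_eq_zpow hp hs.symm hbj (ha ▸ dvd_pow_self p m.succ_ne_zero)
  obtain ⟨u, hu⟩ := exists_geom_sum_eq_of_dvd_sub_one (hp.odd_of_ne_two hodd) hs1
  rw [mul_pow_of_conj_eq_zpow (conj_zpow_of_conj_eq_zpow hs.symm i), hbj, mul_one, hu] at h
  exact zpow_mem_zpowers_of_zpow_eq_one hp ha h

end Metacyclic

/-- Let p be an odd prime and G = ⟨a⟩ ⋊ ⟨b⟩ with |a| = p^n (n ≥ 1), |b| = p,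
⟨a⟩ normal and ⟨a⟩ ∩ ⟨b⟩ = 1. Then {g : g^p = 1} = ⟨a^(p^(n-1)), b⟩, which is
elementary abelian of order p^2. -/
theorem omega_one_of_metacyclic
    (p : ℕ) (hp : p.Prime) (hodd : p ≠ 2)
    {G : Type*} [Group G] (a b : G) (n : ℕ) (hn : 1 ≤ n)
    (ha : orderOf a = p ^ n) (hb : orderOf b = p)
    (haN : (Subgroup.zpowers a).Normal)
    (hab : Subgroup.zpowers a ⊓ Subgroup.zpowers b = ⊥)
    (hgen : Subgroup.closure {a, b} = ⊤) :
    {g : G | g ^ p = 1} = (Subgroup.closure {a ^ p ^ (n - 1), b} : Set G) ∧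
    Nat.card (Subgroup.closure {a ^ p ^ (n - 1), b} : Subgroup G) = p ^ 2 ∧
    (∀ x ∈ Subgroup.closure {a ^ p ^ (n - 1), b},
      ∀ y ∈ Subgroup.closure {a ^ p ^ (n - 1), b}, x * y = y * x) ∧
    (∀ x ∈ Subgroup.closure {a ^ p ^ (n - 1), b}, x ^ p = 1) := by
  obtain ⟨m, rfl⟩ : ∃ m, n = m + 1 := ⟨n - 1, by omega⟩
  rw [Nat.add_sub_cancel]
  set c := a ^ p ^ m
  have hbp : b ^ p = 1 := hb ▸ pow_orderOf_eq_one b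
  have hc : orderOf c = p := by
    rw [orderOf_pow_of_dvd (pow_ne_zero m hp.ne_zero) (ha ▸ pow_dvd_pow p m.le_succ), ha,
      pow_succ, Nat.mul_div_cancel_left _ (pow_pos hp.pos m)]
  have hcp : c ^ p = 1 := hc ▸ pow_orderOf_eq_one c
  obtain ⟨r, hr⟩ := mem_zpowers_iff.mp (haN.conj_mem a (mem_zpowers a) b)
  have hbc : Commute b c := by
    have hconj := conj_zpow_of_conj_eq_zpow hr.symm (p ^ m : ℕ)
    rw [zpow_natCast] at hconj
    exact commute_of_conj_eq_zpow hconj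
      (hc ▸ dvd_sub_one_of_conj_eq_zpow hp hr.symm hbp (ha ▸ dvd_pow_self p m.succ_ne_zero))
  have hdisj : Disjoint (zpowers c) (zpowers b) :=
    (disjoint_iff.mpr hab).mono_left (zpowers_le.mpr (npow_mem_zpowers a _))
  have hexp (g : G) : g ∈ closure {c, b} → g ^ p = 1 :=
    pow_eq_one_of_mem_closure_pair hbc.symm hcp hbp
  refine ⟨Set.ext fun g => ⟨fun hg => ?_, hexp g⟩,
    by rw [card_closure_pair_of_commute hbc.symm hdisj, hc, hb, sq],
    fun x hx y hy => mul_comm_of_mem_closure_pair hbc.symm hx hy, hexp⟩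
  obtain ⟨-, ⟨i, rfl⟩, -, ⟨j, rfl⟩, rfl⟩ :=
    mem_sup_of_normal_left.mp (closure_pair_eq_sup_zpowers a b ▸ hgen ▸ mem_top g)
  have hai : a ^ i ∈ zpowers c := zpow_mem_zpowers_of_mul_zpow_pow_eq_one hp hodd ha hbp haN hg
  exact mul_mem (zpowers_le.mpr (subset_closure (by simp)) hai)
    (zpow_mem (subset_closure (by simp)) j)
end

section
/- For every prime p, the cyclic group Z_p (the integers modulo p, written additively) has exactly p − 1 skew-morphisms; that is, the number of permutations σ of Z_p with σ(0) = 0 for which there exists a function π : Z_p → ℤ satisfying σ(x + y) = σ(x) + σ^{π(x)}(y) for all x, y in Z_p is exactly p − 1. -/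
/-!
A skew-morphism `σ` satisfies `σ * τ b = τ (σ b) * σ ^ π b` for the translations `τ b`, so
`⟨σ⟩ * T ⊆ T * ⟨σ⟩` for the translation group `T`. By Itô's argument for products of two abelian
groups, `M = ⁅T, ⟨σ⟩⁆` is abelian and normalized by `T` and by `σ`. If `M = 1`, `σ` centralizes
`T`. Otherwise the orbit of `0` under `M` is a nonzero subgroup of the group of prime order `p`,
so the abelian group `M` is transitive, hence regular of order `p`: a Sylow `p`-subgroup of the
symmetric group normalized by the `p`-group `T`, so `M = T`. Either way `σ` normalizes `T`, and a
permutation fixing `0` that normalizes the translations is additive. Hence the skew-morphisms of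
`ZMod p` are its `p - 1` automorphisms.
-/

open Equiv Subgroup
open scoped Pointwise commutatorElement

theorem Nat.Prime.factorization_factorial_self {p : ℕ} (hp : p.Prime) :
    p.factorial.factorization p = 1 := by
  rw [← Nat.mul_factorial_pred hp.ne_zero,
    Nat.factorization_mul hp.ne_zero (Nat.factorial_ne_zero _), Finsupp.add_apply,
    hp.factorization_self, Nat.factorization_factorial_eq_zero_of_lt (Nat.sub_lt hp.pos one_pos)]

section Commutator

variable {G : Type*} [Group G]

theorem commutatorElement_mul_left_of_commute {a b c : G} (h : Commute c b) :
    ⁅a * c, b⁆ = ⁅a, b⁆ := by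
  simp only [commutatorElement_def, mul_inv_rev, mul_assoc, h.eq, mul_inv_cancel_left]

theorem commutatorElement_mul_right_of_commute {a b c : G} (h : Commute a c) :
    ⁅a, b * c⁆ = ⁅a, b⁆ := by
  simp only [commutatorElement_def, mul_inv_rev, mul_assoc]
  rw [← mul_assoc c, ← h.inv_left.eq]
  group

namespace Subgroup

variable {A B : Subgroup G}

theorem coe_mul_subset_comm (h : (B : Set G) * A ⊆ A * B) : (A : Set G) * B ⊆ B * A := by
  simpa only [mul_inv_rev, inv_coe_set] using Set.inv_subset_inv.mpr h

theorem conj_commutatorElement_of_mem_left [IsMulCommutative A] {a₀ a a' b b' : G}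
    (ha₀ : a₀ ∈ A) (ha : a ∈ A) (ha' : a' ∈ A) (h : b' * a' = a₀ * b) :
    a₀ * ⁅a, b⁆ * a₀⁻¹ = ⁅a, b'⁆ := by
  rw [conjugate_commutatorElement, mul_inv_eq_of_eq_mul (setLike_mul_comm ha₀ ha),
    ← h, mul_assoc]
  exact commutatorElement_mul_right_of_commute
    (setLike_mul_comm ha (A.mul_mem ha' (A.inv_mem ha₀)))

theorem conj_commutatorElement_of_mem_right [IsMulCommutative B] {b₀ a a' b b' : G}
    (hb₀ : b₀ ∈ B) (hb : b ∈ B) (hb' : b' ∈ B) (h : a' * b' = b₀ * a) :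
    b₀ * ⁅a, b⁆ * b₀⁻¹ = ⁅a', b⁆ := by
  rw [conjugate_commutatorElement, mul_inv_eq_of_eq_mul (setLike_mul_comm hb₀ hb),
    ← h, mul_assoc]
  exact commutatorElement_mul_left_of_commute
    (setLike_mul_comm (B.mul_mem hb' (B.inv_mem hb₀)) hb)

theorem left_le_normalizer_commutator [IsMulCommutative A] (hBA : (B : Set G) * A ⊆ A * B) :
    A ≤ normalizer (⁅A, B⁆ : Subgroup G) := by
  rw [commutator_def, le_normalizer_closure_iff]
  rintro a₀ ha₀ _ ⟨a, ha, b, hb, rfl⟩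
  obtain ⟨b', hb', a', ha', h⟩ := coe_mul_subset_comm hBA (Set.mul_mem_mul ha₀ hb)
  exact subset_closure ⟨a, ha, b', hb', (conj_commutatorElement_of_mem_left ha₀ ha ha' h).symm⟩

theorem right_le_normalizer_commutator [IsMulCommutative B] (hBA : (B : Set G) * A ⊆ A * B) :
    B ≤ normalizer (⁅A, B⁆ : Subgroup G) := by
  rw [commutator_def, le_normalizer_closure_iff]
  rintro b₀ hb₀ _ ⟨a, ha, b, hb, rfl⟩
  obtain ⟨a', ha', b', hb', h⟩ := hBA (Set.mul_mem_mul hb₀ ha)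
  exact subset_closure ⟨a', ha', b, hb, (conj_commutatorElement_of_mem_right hb₀ hb hb' h).symm⟩

/-- Itô's theorem: conjugating `⁅a, b⁆` successively by `b'⁻¹`, `a'⁻¹`, `b'`, `a'` moves it
through `⁅a₁, b⁆`, `⁅a₁, b₁⁆`, `⁅a, b₁⁆` back to `⁅a, b⁆`. -/
theorem commute_commutatorElement [IsMulCommutative A] [IsMulCommutative B]
    (hBA : (B : Set G) * A ⊆ A * B) {a a' b b' : G} (ha : a ∈ A) (ha' : a' ∈ A) (hb : b ∈ B)
    (hb' : b' ∈ B) : Commute ⁅a', b'⁆ ⁅a, b⁆ := by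
  obtain ⟨a₁, ha₁, β, hβ, h₁⟩ := Set.mem_mul.mp <| hBA (Set.mul_mem_mul (B.inv_mem hb') ha)
  obtain ⟨b₁, hb₁, α, hα, h₂⟩ :=
    Set.mem_mul.mp <| coe_mul_subset_comm hBA (Set.mul_mem_mul (A.inv_mem ha') hb)
  have h₃ : a * β⁻¹ = b' * a₁ := by rw [mul_inv_eq_iff_eq_mul, mul_assoc, h₁, mul_inv_cancel_left]
  have h₄ : b * α⁻¹ = a' * b₁ := by rw [mul_inv_eq_iff_eq_mul, mul_assoc, h₂, mul_inv_cancel_left]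
  rw [commute_iff_eq, ← mul_inv_eq_iff_eq_mul]
  calc ⁅a', b'⁆ * ⁅a, b⁆ * ⁅a', b'⁆⁻¹
      = a' * (b' * (a'⁻¹ * (b'⁻¹ * ⁅a, b⁆ * b'⁻¹⁻¹) * a'⁻¹⁻¹) * b'⁻¹) * a'⁻¹ := by
        simp only [commutatorElement_def]; group
    _ = ⁅a, b⁆ := by
      rw [conj_commutatorElement_of_mem_right (B.inv_mem hb') hb hβ h₁,
        conj_commutatorElement_of_mem_left (A.inv_mem ha') ha₁ hα h₂,
        conj_commutatorElement_of_mem_right hb' hb₁ (B.inv_mem hβ) h₃,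
        conj_commutatorElement_of_mem_left ha' ha (A.inv_mem hα) h₄]

theorem isMulCommutative_commutator [IsMulCommutative A] [IsMulCommutative B]
    (hBA : (B : Set G) * A ⊆ A * B) : IsMulCommutative (⁅A, B⁆ : Subgroup G) := by
  rw [commutator_def]
  refine isMulCommutative_closure ?_
  rintro _ ⟨a, ha, b, hb, rfl⟩ _ ⟨a', ha', b', hb', rfl⟩
  exact (commute_commutatorElement hBA ha' ha hb' hb).eq

theorem zpowers_mul_subset_of_mul_subset [Finite G] {A : Subgroup G} {g : G}
    (h : ∀ a ∈ A, g * a ∈ (A : Set G) * zpowers g) :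
    (zpowers g : Set G) * A ⊆ A * zpowers g := by
  rintro _ ⟨_, hb, a, ha, rfl⟩
  obtain ⟨n, rfl⟩ := mem_powers_iff_mem_zpowers.mpr hb
  clear hb
  induction n generalizing a with
  | zero => exact ⟨a, ha, 1, one_mem _, by simp⟩
  | succ n ih =>
    obtain ⟨a', ha', _, ⟨m, rfl⟩, h'⟩ := h a ha
    obtain ⟨a'', ha'', _, ⟨k, rfl⟩, h''⟩ := ih a' ha'
    refine ⟨a'', ha'', g ^ k * g ^ m, mul_mem (zpow_mem_zpowers g k) (zpow_mem_zpowers g m), ?_⟩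
    simp only at h' h'' ⊢
    rw [pow_succ, mul_assoc, ← h', ← mul_assoc (g ^ n), ← h'', mul_assoc]

end Subgroup

end Commutator

namespace Equiv.Perm

theorem card_subgroup_eq_of_isMulCommutative {α : Type*} {H : Subgroup (Perm α)}
    [IsMulCommutative H] (x₀ : α) (htrans : ∀ x, ∃ g ∈ H, g x₀ = x) :
    Nat.card H = Nat.card α := by
  refine Nat.card_eq_of_bijective (fun g => (g : Perm α) x₀) ⟨fun g k hgk => ?_, fun x => ?_⟩
  · ext y
    obtain ⟨m, hm, rfl⟩ := htrans y
    calc (g : Perm α) (m x₀) = ((g : Perm α) * m) x₀ := rfl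
      _ = m ((g : Perm α) x₀) := by rw [setLike_mul_comm g.2 hm]; rfl
      _ = m ((k : Perm α) x₀) := congrArg m hgk
      _ = (k : Perm α) (m x₀) := by rw [← Perm.mul_apply, setLike_mul_comm hm k.2]; rfl
  · obtain ⟨g, hg, rfl⟩ := htrans x
    exact ⟨⟨g, hg⟩, rfl⟩

section AddGroup

variable {α : Type*} [AddGroup α]

variable (α) in
def translations : Subgroup (Perm α) where
  carrier := Set.range (Equiv.addLeft : α → Perm α)
  mul_mem' := by
    rintro _ _ ⟨a, rfl⟩ ⟨b, rfl⟩
    exact ⟨a + b, addLeft_add a b⟩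
  one_mem' := ⟨0, addLeft_zero⟩
  inv_mem' := by
    rintro _ ⟨a, rfl⟩
    exact ⟨-a, (neg_addLeft a).symm⟩

theorem addLeft_mem_translations (a : α) : Equiv.addLeft a ∈ translations α := ⟨a, rfl⟩

theorem card_translations : Nat.card (translations α) = Nat.card α := by
  refine (Nat.card_eq_of_bijective (fun a => ⟨Equiv.addLeft a, addLeft_mem_translations a⟩)
    ⟨fun a b h => ?_, ?_⟩).symm
  · simpa using congr(($h : Perm α) 0)
  · rintro ⟨_, a, rfl⟩
    exact ⟨a, rfl⟩

theorem map_add_of_mem_normalizer_translations {σ : Perm α} (h0 : σ 0 = 0)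
    (hσ : σ ∈ normalizer (translations α : Set (Perm α))) (x y : α) :
    σ (x + y) = σ x + σ y := by
  obtain ⟨c, hc⟩ := (mem_normalizer_iff.mp hσ _).mp (addLeft_mem_translations x)
  have key (z : α) : c + σ z = σ (x + z) := by
    simpa [h0] using congr($hc (σ z))
  rw [← key, show c = σ x by simpa [h0] using key 0]

def zeroOrbit (H : Subgroup (Perm α)) (hH : translations α ≤ normalizer (H : Set (Perm α))) :
    AddSubgroup α where
  carrier := {x | ∃ g ∈ H, g 0 = x}
  zero_mem' := ⟨1, H.one_mem, rfl⟩
  add_mem' := by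
    rintro _ _ ⟨g, hg, rfl⟩ ⟨h, hh, rfl⟩
    refine ⟨Equiv.addLeft (g 0) * h * (Equiv.addLeft (g 0))⁻¹ * g,
      H.mul_mem (le_normalizer_iff.mp hH _ (addLeft_mem_translations _) h hh) hg, ?_⟩
    simp
  neg_mem' := by
    rintro _ ⟨g, hg, rfl⟩
    refine ⟨Equiv.addLeft (-g 0) * g⁻¹ * (Equiv.addLeft (-g 0))⁻¹,
      le_normalizer_iff.mp hH _ (addLeft_mem_translations _) _ (H.inv_mem hg), ?_⟩
    simp

theorem eq_bot_of_zeroOrbit_eq_bot {H : Subgroup (Perm α)}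
    {hH : translations α ≤ normalizer (H : Set (Perm α))} (h : zeroOrbit H hH = ⊥) : H = ⊥ := by
  refine (eq_bot_iff_forall H).mpr fun g hg => Equiv.ext fun a => ?_
  have : -a + g a ∈ zeroOrbit H hH :=
    ⟨_, le_normalizer_iff.mp hH _ (addLeft_mem_translations (-a)) g hg, by simp⟩
  rw [h, AddSubgroup.mem_bot, neg_add_eq_zero] at this
  exact this.symm

theorem translations_eq_of_card_eq [hp : Fact (Nat.card α).Prime]
    {H : Subgroup (Perm α)} (hcard : Nat.card H = Nat.card α)
    (hH : translations α ≤ normalizer (H : Set (Perm α))) : translations α = H := by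
  have : Finite α := Nat.finite_of_card_ne_zero hp.out.ne_zero
  have hA : IsPGroup (Nat.card α) (translations α) :=
    IsPGroup.of_card (n := 1) (by rw [card_translations, pow_one])
  have hle : translations α ⊓ normalizer (H : Set (Perm α)) = translations α ⊓ H :=
    hA.inf_normalizer_sylow <| Sylow.ofCard H <| by
      rw [Nat.card_perm, hp.out.factorization_factorial_self, pow_one, hcard]
  rw [inf_eq_left.mpr hH, left_eq_inf] at hle
  exact Subgroup.eq_of_le_of_card_ge hle (by rw [hcard, card_translations])

def IsSkewMorphism (σ : Perm α) : Prop :=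
  σ 0 = 0 ∧ ∃ π : α → ℤ, ∀ x y, σ (x + y) = σ x + (σ ^ π x) y

theorem _root_.AddEquiv.isSkewMorphism (f : AddAut α) : IsSkewMorphism f.toEquiv :=
  ⟨f.map_zero, fun _ => 1, fun x y => by simp⟩

namespace IsSkewMorphism

theorem zpowers_mul_translations_subset [Finite α] {σ : Perm α} (hσ : IsSkewMorphism σ) :
    (zpowers σ : Set (Perm α)) * translations α ⊆ translations α * zpowers σ := by
  obtain ⟨-, π, hπ⟩ := hσ
  refine zpowers_mul_subset_of_mul_subset ?_
  rintro _ ⟨b, rfl⟩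
  exact ⟨_, addLeft_mem_translations (σ b), _, zpow_mem_zpowers σ (π b),
    Equiv.ext fun y => (hπ b y).symm⟩

end IsSkewMorphism

end AddGroup

section AddCommGroup

variable {α : Type*} [AddCommGroup α]

instance : IsMulCommutative (translations α) := by
  refine .of_setLike_mul_comm ?_
  rintro _ ⟨a, rfl⟩ _ ⟨b, rfl⟩
  rw [← addLeft_add, ← addLeft_add, add_comm]

namespace IsSkewMorphism

variable {σ : Perm α}

theorem mem_normalizer_translations [Fact (Nat.card α).Prime] (hσ : IsSkewMorphism σ) :
    σ ∈ normalizer (translations α : Set (Perm α)) := by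
  have : Finite α := Nat.finite_of_card_ne_zero (Fact.out : (Nat.card α).Prime).ne_zero
  have hBA := hσ.zpowers_mul_translations_subset
  rcases eq_or_ne ⁅translations α, zpowers σ⁆ ⊥ with hM | hM
  · rw [commutator_eq_bot_iff_le_centralizer, le_centralizer_iff] at hM
    exact centralizer_le_normalizer _ (hM (mem_zpowers σ))
  have := isMulCommutative_commutator hBA
  have hN := left_le_normalizer_commutator hBA
  have htrans : ∀ x, ∃ g ∈ ⁅translations α, zpowers σ⁆, g 0 = x := fun x =>
    ((zeroOrbit _ hN).eq_bot_or_eq_top_of_prime_card.resolve_left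
      (mt eq_bot_of_zeroOrbit_eq_bot hM)).ge (AddSubgroup.mem_top x)
  rw [translations_eq_of_card_eq (card_subgroup_eq_of_isMulCommutative 0 htrans) hN]
  exact right_le_normalizer_commutator hBA (mem_zpowers σ)

theorem map_add [Fact (Nat.card α).Prime] (hσ : IsSkewMorphism σ) (x y : α) :
    σ (x + y) = σ x + σ y :=
  map_add_of_mem_normalizer_translations hσ.1 hσ.mem_normalizer_translations x y

end IsSkewMorphism

def skewMorphismEquivAddAut [Fact (Nat.card α).Prime] :
    {σ : Perm α // IsSkewMorphism σ} ≃ AddAut α where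
  toFun σ := ⟨σ.1, σ.2.map_add⟩
  invFun f := ⟨f.toEquiv, f.isSkewMorphism⟩
  left_inv _ := rfl
  right_inv _ := rfl

end AddCommGroup

end Equiv.Perm

open Equiv.Perm in
/-- For every prime p, the cyclic group Z_p has exactly p − 1 skew-morphisms. -/
theorem card_skew_morphisms_zmod_p (p : ℕ) (hp : p.Prime) :
    Nat.card {σ : Equiv.Perm (ZMod p) //
      σ 0 = 0 ∧ ∃ π : ZMod p → ℤ, ∀ x y : ZMod p, σ (x + y) = σ x + (σ ^ π x) y} =
      p - 1 := by
  have : Fact p.Prime := ⟨hp⟩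
  have : Fact (Nat.card (ZMod p)).Prime := ⟨by rwa [Nat.card_zmod]⟩
  calc Nat.card {σ : Equiv.Perm (ZMod p) // IsSkewMorphism σ}
      = Nat.card (AddAut (ZMod p)) := Nat.card_congr skewMorphismEquivAddAut
    _ = Nat.card (ZMod p)ˣ := Nat.card_congr (ZMod.AddAutEquivUnits p).toEquiv
    _ = p - 1 := by rw [Nat.card_eq_fintype_card, ZMod.card_units]
end

section
/- Let p be an odd prime, L = GL(3, F_p), let g1 be the matrix with rows (1,1,0), (0,1,0), (0,0,1), and let L act on the right on row vectors in F_p^3, via v ↦ v·M. Let W = {(0, a, b) : a, b in F_p}, the 2-dimensional subspace of row vectors with first coordinate zero (which g1 fixes pointwise). Let Ω be the set of all x in L such that: x commutes with g1; x is not the identity matrix; x^(p−1) is the identity (the order of x divides p − 1); and x moves every affine coset v + W with v not in W, i.e. for every row vector v in F_p^3 with v not in W one has v·x − v not in W. Then the cardinality of Ω is (p − 2)·(p − 1)·(p^2 − p − 1). -/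
/-!
A matrix commuting with `g₁ = 1 + E₀₁` has the shape `[[a, b, c], [0, a, 0], [0, e, f]]`, and it
moves every coset of `W` iff `a ≠ 1`. Write it as `a • 1 + N`; in characteristic `p` the Frobenius
gives `x ^ p = a ^ p + N ^ p = a + N ^ p`, and the powers of `N` are explicit. Hence
`x ^ (p - 1) = 1`, i.e. `x ^ p = x`, means `b (f - a) = c e` when `f ≠ a`, and `x = a • 1` when
`f = a`. So there are `p - 2` choices of `a`, and for each of them either `f = a` or `f ∉ {0, a}`
with `c, e` free and `b` determined: `(p - 2) ((p - 2) p² + 1) = (p - 2) (p - 1) (p² - p - 1)`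
elements.
-/

open Matrix

/-- The element g1 of GL(3, F_p): rows (1,1,0), (0,1,0), (0,0,1). -/
noncomputable def gOne (p : ℕ) [Fact p.Prime] : GL (Fin 3) (ZMod p) :=
  Matrix.GeneralLinearGroup.mkOfDetNeZero !![1, 1, 0; 0, 1, 0; 0, 0, 1]
    (by simp [Matrix.det_fin_three, Matrix.vecHead, Matrix.vecTail])

theorem pow_sub_one_eq_one_iff_pow_eq_self {G : Type*} [Group G] {n : ℕ} (hn : n ≠ 0) (x : G) :
    x ^ (n - 1) = 1 ↔ x ^ n = x := by
  obtain ⟨m, rfl⟩ := Nat.exists_eq_succ_of_ne_zero hn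
  rw [Nat.succ_sub_one, pow_succ, mul_eq_right]

theorem card_ne_and_ne {α : Type*} [Fintype α] [DecidableEq α] {u v : α} (huv : u ≠ v) :
    Fintype.card {x : α // x ≠ u ∧ x ≠ v} = Fintype.card α - 2 := by
  rw [Fintype.card_subtype, ← Finset.card_univ, ← Finset.card_pair huv,
    ← Finset.card_sdiff_of_subset (Finset.subset_univ _)]
  congr 1
  ext x
  simp

section CentralizerMatrix

variable {R : Type*}

def centralizerMatrix [Zero R] (a b c e f : R) : Matrix (Fin 3) (Fin 3) R :=
  !![a, b, c; 0, a, 0; 0, e, f]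

theorem centralizerMatrix_inj [Zero R] {a b c e f a' b' c' e' f' : R} :
    centralizerMatrix a b c e f = centralizerMatrix a' b' c' e' f' ↔
      a = a' ∧ b = b' ∧ c = c' ∧ e = e' ∧ f = f' := by
  refine ⟨fun h => ?_, by rintro ⟨rfl, rfl, rfl, rfl, rfl⟩; rfl⟩
  have h' := Matrix.ext_iff.mpr h
  exact ⟨h' 0 0, h' 0 1, h' 0 2, h' 2 1, h' 2 2⟩

theorem centralizerMatrix_mul [Semiring R] (a b c e f a' b' c' e' f' : R) :
    centralizerMatrix a b c e f * centralizerMatrix a' b' c' e' f' =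
      centralizerMatrix (a * a') (a * b' + b * a' + c * e') (a * c' + c * f')
        (e * a' + f * e') (f * f') := by
  ext i j
  fin_cases i <;> fin_cases j <;> simp [centralizerMatrix, Matrix.mul_apply, Fin.sum_univ_three]

theorem det_centralizerMatrix [CommRing R] (a b c e f : R) :
    (centralizerMatrix a b c e f).det = a * a * f := by
  simp [centralizerMatrix, Matrix.det_fin_three]

theorem vecMul_centralizerMatrix_zero [Semiring R] (v : Fin 3 → R) (a b c e f : R) :
    (v ᵥ* centralizerMatrix a b c e f) 0 = v 0 * a := by
  simp [centralizerMatrix, Matrix.vecMul, dotProduct, Fin.sum_univ_three]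

theorem mul_comm_centralizerMatrix_iff [CommRing R] (M : Matrix (Fin 3) (Fin 3) R) :
    M * centralizerMatrix 1 1 0 0 1 = centralizerMatrix 1 1 0 0 1 * M ↔
      ∃ a b c e f, M = centralizerMatrix a b c e f := by
  constructor
  · intro h
    have h' := Matrix.ext_iff.mpr h
    have h01 := h' 0 1
    have h10 := h' 1 1
    have h20 := h' 2 1
    have h12 := h' 0 2
    simp only [centralizerMatrix, Matrix.mul_apply, of_apply, cons_val', cons_val_one,
      cons_val_zero, cons_val_fin_one, Fin.sum_univ_three, mul_one, cons_val, mul_zero, add_zero,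
      one_mul, zero_mul, zero_add, add_eq_right, left_eq_add] at h01 h10 h20 h12
    have h11 : M 1 1 = M 0 0 := by linear_combination -h01
    refine ⟨M 0 0, M 0 1, M 0 2, M 2 1, M 2 2, ?_⟩
    rw [Matrix.eta_fin_three M]
    simp [centralizerMatrix, h10, h20, h12, h11]
  · rintro ⟨a, b, c, e, f, rfl⟩
    simp only [centralizerMatrix_mul]
    congr 1 <;> ring

theorem centralizerMatrix_eq_scalar_add [CommRing R] (a b c e f : R) :
    centralizerMatrix a b c e f = scalar (Fin 3) a + centralizerMatrix 0 b c e (f - a) := by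
  ext i j
  fin_cases i <;> fin_cases j <;> simp [centralizerMatrix]

theorem centralizerMatrix_zero_pow_add_two [CommRing R] (b c e d : R) (k : ℕ) :
    centralizerMatrix 0 b c e d ^ (k + 2) =
      centralizerMatrix 0 (d ^ k * (c * e)) (d ^ (k + 1) * c) (d ^ (k + 1) * e) (d ^ (k + 2)) := by
  induction k with
  | zero => rw [zero_add, sq, centralizerMatrix_mul]; congr 1 <;> ring
  | succ k ih => rw [pow_succ, ih, centralizerMatrix_mul]; congr 1 <;> ring

theorem centralizerMatrix_pow_char [CommRing R] (p : ℕ) [Fact p.Prime] [CharP R p]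
    (a b c e f : R) :
    centralizerMatrix a b c e f ^ p =
      centralizerMatrix (a ^ p) ((f - a) ^ (p - 2) * (c * e)) ((f - a) ^ (p - 1) * c)
        ((f - a) ^ (p - 1) * e) (f ^ p) := by
  rw [centralizerMatrix_eq_scalar_add,
    add_pow_char_of_commute _ (scalar_commute _ (Commute.all _) _), ← map_pow,
    centralizerMatrix_eq_scalar_add (a ^ p), ← sub_pow_char]
  obtain ⟨k, rfl⟩ : ∃ k, p = k + 2 := ⟨p - 2, by have := (Fact.out : p.Prime).two_le; omega⟩
  rw [centralizerMatrix_zero_pow_add_two]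
  simp

theorem forall_vecMul_centralizerMatrix_sub_ne_zero_iff [Ring R] [NoZeroDivisors R] [Nontrivial R]
    (a b c e f : R) :
    (∀ v : Fin 3 → R, v 0 ≠ 0 → (v ᵥ* centralizerMatrix a b c e f - v) 0 ≠ 0) ↔ a ≠ 1 := by
  have hsub (v : Fin 3 → R) : (v ᵥ* centralizerMatrix a b c e f - v) 0 = v 0 * (a - 1) := by
    rw [Pi.sub_apply, vecMul_centralizerMatrix_zero, mul_sub, mul_one]
  simp only [hsub, ne_eq, mul_eq_zero, sub_eq_zero, not_or]
  refine ⟨fun h => (h (Pi.single 0 1) (by simp)).2, fun ha v hv => ⟨hv, ha⟩⟩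

end CentralizerMatrix

/-- Exactly the parameters for which `centralizerMatrix a b c e f` is diagonalizable. -/
def SemisimpleParams {K : Type*} [Field K] (a b c e f : K) : Prop :=
  (f ≠ a ∧ b * (f - a) = c * e) ∨ (f = a ∧ b = 0 ∧ c = 0 ∧ e = 0)

theorem centralizerMatrix_pow_eq_self_iff {p : ℕ} [Fact p.Prime] (a b c e f : ZMod p) :
    centralizerMatrix a b c e f ^ p = centralizerMatrix a b c e f ↔
      SemisimpleParams a b c e f := by
  rw [centralizerMatrix_pow_char, ZMod.pow_card, ZMod.pow_card, centralizerMatrix_inj,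
    SemisimpleParams]
  obtain ⟨k, rfl⟩ : ∃ k, p = k + 2 := ⟨p - 2, by have := (Fact.out : p.Prime).two_le; omega⟩
  rcases eq_or_ne f a with rfl | hfa
  · simp only [sub_self, Nat.add_sub_cancel, show k + 2 - 1 = k + 1 from rfl,
      zero_pow (Nat.succ_ne_zero k), zero_mul, true_and, and_true, ne_eq, not_true, false_and,
      false_or]
    constructor
    · rintro ⟨rfl, rfl, rfl⟩
      simp
    · rintro ⟨rfl, rfl, rfl⟩
      simp
  · have hd : f - a ≠ 0 := sub_ne_zero.mpr hfa
    have hpow : (f - a) ^ (k + 1) = 1 := ZMod.pow_card_sub_one_eq_one hd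
    simp only [Nat.add_sub_cancel, show k + 2 - 1 = k + 1 from rfl, hpow, one_mul, true_and,
      and_true, hfa, ne_eq, not_false_eq_true, false_and, or_false]
    constructor
    · intro h
      linear_combination (-(f - a)) * h + (c * e) * hpow
    · intro h
      linear_combination (-(f - a) ^ k) * h + b * hpow

def Omega (p : ℕ) [Fact p.Prime] : Set (GL (Fin 3) (ZMod p)) :=
  {x | x * gOne p = gOne p * x ∧ x ≠ 1 ∧ x ^ (p - 1) = 1 ∧
    ∀ v : Fin 3 → ZMod p, v 0 ≠ 0 → (v ᵥ* (x : Matrix (Fin 3) (Fin 3) (ZMod p)) - v) 0 ≠ 0}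

theorem mem_Omega_iff {p : ℕ} [Fact p.Prime] (x : GL (Fin 3) (ZMod p)) :
    x ∈ Omega p ↔ ∃ a b c e f,
      (x : Matrix (Fin 3) (Fin 3) (ZMod p)) = centralizerMatrix a b c e f ∧ a ≠ 1 ∧
        SemisimpleParams a b c e f := by
  have hg : (gOne p : Matrix (Fin 3) (Fin 3) (ZMod p)) = centralizerMatrix 1 1 0 0 1 := rfl
  rw [Omega, Set.mem_ofPred_eq, Units.ext_iff, Units.val_mul, Units.val_mul, hg,
    mul_comm_centralizerMatrix_iff,
    pow_sub_one_eq_one_iff_pow_eq_self (Fact.out : p.Prime).ne_zero, Units.ext_iff,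
    Units.val_pow_eq_pow_val]
  constructor
  · rintro ⟨⟨a, b, c, e, f, hx⟩, -, hpow, hmove⟩
    rw [hx, forall_vecMul_centralizerMatrix_sub_ne_zero_iff] at hmove
    rw [hx, centralizerMatrix_pow_eq_self_iff] at hpow
    exact ⟨a, b, c, e, f, hx, hmove, hpow⟩
  · rintro ⟨a, b, c, e, f, hx, ha, hss⟩
    refine ⟨⟨a, b, c, e, f, hx⟩, ?_, ?_, ?_⟩
    · rintro rfl
      exact ha (by simpa [centralizerMatrix] using (congrFun (congrFun hx 0) 0).symm)
    · rwa [hx, centralizerMatrix_pow_eq_self_iff]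
    · rwa [hx, forall_vecMul_centralizerMatrix_sub_ne_zero_iff]

section Parametrization

variable (K : Type*) [Field K]

abbrev OmegaParams : Type _ :=
  Σ a : {a : K // a ≠ 0 ∧ a ≠ 1}, Option ({f : K // f ≠ 0 ∧ f ≠ a} × K × K)

variable {K}

def omegaMatrix : OmegaParams K → Matrix (Fin 3) (Fin 3) K
  | ⟨a, none⟩ => centralizerMatrix a 0 0 0 a
  | ⟨a, some (f, c, e)⟩ => centralizerMatrix a (c * e / (f - a)) c e f

theorem omegaMatrix_injective : Function.Injective (omegaMatrix (K := K)) := by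
  rintro ⟨⟨a, ha⟩, _ | ⟨⟨f, hf⟩, c, e⟩⟩ ⟨⟨a', ha'⟩, _ | ⟨⟨f', hf'⟩, c', e'⟩⟩ h <;>
    simp only [omegaMatrix, centralizerMatrix_inj] at h
  · obtain ⟨rfl, -⟩ := h
    rfl
  · exact absurd (h.2.2.2.2.symm.trans h.1) hf'.2
  · exact absurd (h.2.2.2.2.trans h.1.symm) hf.2
  · obtain ⟨rfl, -, rfl, rfl, rfl⟩ := h
    rfl

theorem mem_range_omegaMatrix (M : Matrix (Fin 3) (Fin 3) K) :
    M ∈ Set.range omegaMatrix ↔ ∃ a b c e f, M = centralizerMatrix a b c e f ∧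
      a ≠ 0 ∧ a ≠ 1 ∧ f ≠ 0 ∧ SemisimpleParams a b c e f := by
  constructor
  · rintro ⟨⟨⟨a, ha0, ha1⟩, _ | ⟨⟨f, hf0, hfa⟩, c, e⟩⟩, rfl⟩
    · exact ⟨a, 0, 0, 0, a, rfl, ha0, ha1, ha0, Or.inr ⟨rfl, rfl, rfl, rfl⟩⟩
    · refine ⟨a, _, c, e, f, rfl, ha0, ha1, hf0, Or.inl ⟨hfa, ?_⟩⟩
      exact div_mul_cancel₀ _ (sub_ne_zero.mpr hfa)
  · rintro ⟨a, b, c, e, f, rfl, ha0, ha1, hf0, ⟨hfa, hb⟩ | ⟨rfl, rfl, rfl, rfl⟩⟩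
    · refine ⟨⟨⟨a, ha0, ha1⟩, some (⟨f, hf0, hfa⟩, c, e)⟩, ?_⟩
      simp only [omegaMatrix, ← hb, mul_div_cancel_right₀ _ (sub_ne_zero.mpr hfa)]
    · exact ⟨⟨⟨_, ha0, ha1⟩, none⟩, rfl⟩

theorem card_omegaParams [Fintype K] [DecidableEq K] :
    Nat.card (OmegaParams K) =
      (Fintype.card K - 2) * ((Fintype.card K - 2) * Fintype.card K ^ 2 + 1) := by
  have hfiber (a : {a : K // a ≠ 0 ∧ a ≠ 1}) :
      Fintype.card {f : K // f ≠ 0 ∧ f ≠ a} = Fintype.card K - 2 :=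
    card_ne_and_ne (Ne.symm a.2.1)
  rw [Nat.card_eq_fintype_card, Fintype.card_sigma]
  simp only [Fintype.card_option, Fintype.card_prod, card_ne_and_ne zero_ne_one, hfiber,
    Finset.sum_const, Finset.card_univ, smul_eq_mul, sq]

end Parametrization

theorem val_image_Omega (p : ℕ) [Fact p.Prime] :
    Units.val '' Omega p = Set.range omegaMatrix := by
  ext M
  rw [mem_range_omegaMatrix]
  constructor
  · rintro ⟨x, hx, rfl⟩
    obtain ⟨a, b, c, e, f, hM, ha, hss⟩ := (mem_Omega_iff x).mp hx
    have hdet : a * a * f ≠ 0 := by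
      rw [← det_centralizerMatrix a b c e f, ← hM]
      exact x.isUnit.map Matrix.detMonoidHom |>.ne_zero
    exact ⟨a, b, c, e, f, hM, left_ne_zero_of_mul (left_ne_zero_of_mul hdet), ha,
      right_ne_zero_of_mul hdet, hss⟩
  · rintro ⟨a, b, c, e, f, rfl, ha0, ha1, hf0, hss⟩
    have hunit : IsUnit (centralizerMatrix a b c e f) := by
      rw [Matrix.isUnit_iff_isUnit_det, det_centralizerMatrix]
      exact (mul_ne_zero (mul_ne_zero ha0 ha0) hf0).isUnit
    exact ⟨hunit.unit, (mem_Omega_iff _).mpr ⟨a, b, c, e, f, rfl, ha1, hss⟩, rfl⟩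

theorem sub_two_mul_sub_two_mul_sq_add_one (p : ℕ) (hp : 2 ≤ p) :
    (p - 2) * ((p - 2) * p ^ 2 + 1) = (p - 2) * (p - 1) * (p ^ 2 - p - 1) := by
  have h : p + 1 ≤ p ^ 2 := by nlinarith
  rw [Nat.sub_sub]
  zify [hp, h, (by omega : 1 ≤ p)]
  ring

theorem GL3_card_Omega_general (p : ℕ) [Fact p.Prime] :
    Nat.card {x : GL (Fin 3) (ZMod p) |
      x * gOne p = gOne p * x ∧
      x ≠ 1 ∧
      x ^ (p - 1) = 1 ∧
      ∀ v : Fin 3 → ZMod p, v 0 ≠ 0 →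
        (v ᵥ* (x : Matrix (Fin 3) (Fin 3) (ZMod p)) - v) 0 ≠ 0} =
      (p - 2) * (p - 1) * (p ^ 2 - p - 1) := by
  change Nat.card (Omega p) = _
  rw [← Nat.card_image_of_injective Units.val_injective, val_image_Omega,
    Nat.card_range_of_injective omegaMatrix_injective, card_omegaParams, ZMod.card]
  exact sub_two_mul_sub_two_mul_sq_add_one p (Fact.out : p.Prime).two_le

/-- Let p be an odd prime, L = GL(3, F_p) acting on the right on row vectors, and
W = {(0,a,b)} the subspace of row vectors with first coordinate zero. The set Ω of
elements x of L commuting with g1, different from the identity, of order dividing p − 1,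
and moving every affine coset v + W with v ∉ W (i.e. v·x − v ∉ W whenever the first
coordinate of v is nonzero), has cardinality (p − 2)(p − 1)(p² − p − 1). -/
theorem GL3_card_Omega (p : ℕ) [Fact p.Prime] (hodd : p ≠ 2) :
    Nat.card {x : GL (Fin 3) (ZMod p) |
      x * gOne p = gOne p * x ∧
      x ≠ 1 ∧
      x ^ (p - 1) = 1 ∧
      ∀ v : Fin 3 → ZMod p, v 0 ≠ 0 →
        (v ᵥ* (x : Matrix (Fin 3) (Fin 3) (ZMod p)) - v) 0 ≠ 0} =
      (p - 2) * (p - 1) * (p ^ 2 - p - 1) :=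
  GL3_card_Omega_general p
end
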